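/- Let m, n be coprime odd positive integers. Denote by [n/m] the sign of the permutation of Z/mZ induced by multiplication by n, and similarly [m/n]. Then [m/n]·[n/m] = (−1)^((m−1)(n−1)/4). -/

import Mathlib

/-!
Let `P (a, b) = (a, a + m b)` and `Q (a, b) = (n a + b, b)` (`shiftSnd τ` and `shiftFst σ`) be the
permutations of `ZMod m × ZMod n` built fibrewise from `τ = (m * ·)` and `σ = (n * ·)`, residues
being read as their least nonnegative representatives. Translations of a group of odd order are even
and `m`, `n` are odd, so `sign P = sign τ` and `sign Q = sign σ`. Since `Q y = P x` whenever the
row-major index `y.2 + n y.1` of `y` equals the column-major index `x.1 + m x.2` of `x`, the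
permutation `Q⁻¹ P` is conjugate to the transposition of an `m × n` array. Its inversions are the
pairs of cells with `a < a'` and `b > b'`, so its sign is `(-1) ^ (C(m,2) C(n,2))`, and for odd `m`,
`n` this exponent has the parity of `(m - 1)(n - 1) / 4`.
-/

open Equiv Finset

theorem Int.units_pow_of_odd (u : ℤˣ) {k : ℕ} (hk : Odd k) : u ^ k = u := by
  rw [Int.units_pow_eq_pow_mod_two, Nat.odd_iff.mp hk, pow_one]

theorem Nat.add_mul_lt_add_mul_iff_lex {n a a' b b' : ℕ} (hb : b < n) (hb' : b' < n) :
    b + n * a < b' + n * a' ↔ a < a' ∨ a = a' ∧ b < b' := by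
  constructor
  · intro h
    rcases lt_trichotomy a a' with h' | rfl | h'
    · exact Or.inl h'
    · right; omega
    · have : n * (a' + 1) ≤ n * a := Nat.mul_le_mul_left n h'
      nlinarith
  · rintro (h | ⟨rfl, h⟩)
    · have : n * (a + 1) ≤ n * a' := Nat.mul_le_mul_left n h
      nlinarith
    · omega

theorem neg_one_pow_choose_two_mul_choose_two {m n : ℕ} (hm : Odd m) (hn : Odd n) :
    (-1 : ℤˣ) ^ (m.choose 2 * n.choose 2) = (-1) ^ ((m - 1) * (n - 1) / 4) := by
  obtain ⟨u, rfl⟩ := hm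
  obtain ⟨v, rfl⟩ := hn
  have hchoose (k : ℕ) : (2 * k + 1).choose 2 = (2 * k + 1) * k := by
    rw [Nat.choose_two_right, Nat.add_sub_cancel, mul_left_comm, Nat.mul_div_cancel_left _ two_pos]
  have hquarter : (2 * u + 1 - 1) * (2 * v + 1 - 1) / 4 = u * v := by
    rw [Nat.add_sub_cancel, Nat.add_sub_cancel, show 2 * u * (2 * v) = 4 * (u * v) by ring,
      Nat.mul_div_cancel_left _ four_pos]
  rw [hchoose, hchoose, hquarter,
    show (2 * u + 1) * u * ((2 * v + 1) * v) = u * v + 2 * (u * v * (2 * u * v + u + v)) by ring,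
    pow_add, (even_two_mul _).neg_one_pow, mul_one]

theorem Fin.card_filter_fst_lt_snd (k : ℕ) : #{p : Fin k × Fin k | p.1 < p.2} = k.choose 2 := by
  rw [card_filter, Fintype.sum_prod_type_right]
  simp only [← card_filter, filter_gt_eq_Iio, Fin.card_Iio]
  rw [Fin.sum_univ_eq_sum_range (fun i => i), sum_range_id, Nat.choose_two_right]

theorem ZMod.finEquiv_symm_apply_val (n : ℕ) [NeZero n] (a : ZMod n) :
    ((ZMod.finEquiv n).symm a : ℕ) = a.val := by
  cases n with
  | zero => exact absurd rfl (NeZero.ne 0)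
  | succ k => rfl

namespace Equiv.Perm

variable {α β : Type*} [DecidableEq α] [Fintype α] [DecidableEq β] [Fintype β]

theorem sign_eq_neg_one_pow_card_inversions {N : ℕ} (f : Perm (Fin N)) :
    sign f = (-1) ^ #{p : Fin N × Fin N | p.1 < p.2 ∧ f p.2 < f p.1} := by
  rw [sign_eq_prod_prod_Iio, ← prod_const, prod_filter, Fintype.prod_prod_type_right]
  refine prod_congr rfl fun j _ => ?_
  simp only [ite_and]
  rw [← prod_filter, filter_gt_eq_Iio]
  refine prod_congr rfl fun i hi => ?_
  rcases (f.injective.ne (mem_Iio.mp hi).ne).lt_or_gt with h | h <;> simp [h, h.not_gt]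

theorem sign_eq_one_of_pow_eq_one {f : Perm α} {k : ℕ} (hk : Odd k) (h : f ^ k = 1) :
    sign f = 1 := by
  rw [← Int.units_pow_of_odd (sign f) hk, ← map_pow, h, map_one]

theorem sign_trans_addLeft_of_odd_card {G : Type*} [AddGroup G] [Fintype G] [DecidableEq G]
    (hG : Odd (Fintype.card G)) (f : Perm G) (c : G) :
    sign (f.trans (Equiv.addLeft c)) = sign f := by
  have : sign (Equiv.addLeft c) = 1 := sign_eq_one_of_pow_eq_one hG (by ext; simp)
  rw [sign_trans, this, one_mul]

theorem sign_prodCongrRight_of_odd_card (hα : Odd (Fintype.card α)) {π : α → Perm β}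
    {s : ℤˣ} (hπ : ∀ a, sign (π a) = s) : sign (prodCongrRight π) = s := by
  rw [sign_prodCongrRight, prod_congr rfl fun a _ => hπ a, prod_const, card_univ,
    Int.units_pow_of_odd s hα]

theorem sign_prodCongrLeft_of_odd_card (hα : Odd (Fintype.card α)) {π : α → Perm β}
    {s : ℤˣ} (hπ : ∀ a, sign (π a) = s) : sign (prodCongrLeft π) = s := by
  rw [sign_prodCongrLeft, prod_congr rfl fun a _ => hπ a, prod_const, card_univ,
    Int.units_pow_of_odd s hα]

end Equiv.Perm

/-- Sends the row-major index `b + n * a` of the cell `(a, b)` of an `m × n` array to its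
column-major index `a + m * b`. -/
def finTranspose (m n : ℕ) : Perm (Fin (m * n)) :=
  finProdFinEquiv.symm.trans <|
    (prodComm (Fin m) (Fin n)).trans <| finProdFinEquiv.trans <| finCongr (Nat.mul_comm n m)

theorem finTranspose_finProdFinEquiv_val {m n : ℕ} (x : Fin m × Fin n) :
    (finTranspose m n (finProdFinEquiv x) : ℕ) = x.1 + m * x.2 := by
  simp [finTranspose]

theorem card_inversions_finTranspose (m n : ℕ) :
    #{p : Fin (m * n) × Fin (m * n) | p.1 < p.2 ∧ finTranspose m n p.2 < finTranspose m n p.1} =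
      m.choose 2 * n.choose 2 := by
  have hcomm : #{p : Fin n × Fin n | p.2 < p.1} = #{p : Fin n × Fin n | p.1 < p.2} :=
    card_equiv (prodComm _ _) (by simp)
  rw [← Fin.card_filter_fst_lt_snd, ← Fin.card_filter_fst_lt_snd, ← hcomm, ← card_product]
  refine card_equiv ((finProdFinEquiv.prodCongr finProdFinEquiv).symm.trans
    (prodProdProdComm _ _ _ _)) fun ⟨i, j⟩ => ?_
  obtain ⟨⟨a, b⟩, rfl⟩ := finProdFinEquiv.surjective i
  obtain ⟨⟨a', b'⟩, rfl⟩ := finProdFinEquiv.surjective j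
  simp only [mem_filter, mem_univ, true_and, mem_product, Fin.lt_def, finProdFinEquiv_apply_val,
    finTranspose_finProdFinEquiv_val, Nat.add_mul_lt_add_mul_iff_lex, Fin.is_lt, trans_apply,
    prodCongr_symm, prodCongr_apply, symm_apply_apply, prodProdProdComm_apply, Prod.map_apply]
  omega

theorem sign_finTranspose {m n : ℕ} (hm : Odd m) (hn : Odd n) :
    Perm.sign (finTranspose m n) = (-1) ^ ((m - 1) * (n - 1) / 4) := by
  rw [Perm.sign_eq_neg_one_pow_card_inversions, card_inversions_finTranspose,
    neg_one_pow_choose_two_mul_choose_two hm hn]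

namespace Zolotarev

variable {m n : ℕ}

def shiftSnd (τ : Perm (ZMod n)) : Perm (ZMod m × ZMod n) :=
  prodCongrRight fun a => τ.trans (Equiv.addLeft (a.val : ZMod n))

def shiftFst (σ : Perm (ZMod m)) : Perm (ZMod m × ZMod n) :=
  prodCongrLeft fun b => σ.trans (Equiv.addLeft (b.val : ZMod m))

variable [NeZero m] [NeZero n]

theorem sign_shiftSnd (hm : Odd m) (hn : Odd n) (τ : Perm (ZMod n)) :
    Perm.sign (shiftSnd (m := m) τ) = Perm.sign τ :=
  Perm.sign_prodCongrRight_of_odd_card (by rwa [ZMod.card])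
    fun _ => Perm.sign_trans_addLeft_of_odd_card (by rwa [ZMod.card]) _ _

theorem sign_shiftFst (hm : Odd m) (hn : Odd n) (σ : Perm (ZMod m)) :
    Perm.sign (shiftFst (n := n) σ) = Perm.sign σ :=
  Perm.sign_prodCongrLeft_of_odd_card (by rwa [ZMod.card])
    fun _ => Perm.sign_trans_addLeft_of_odd_card (by rwa [ZMod.card]) _ _

theorem shiftFst_eq_shiftSnd {σ : Perm (ZMod m)} {τ : Perm (ZMod n)}
    (hσ : ∀ x, σ x = (n : ZMod m) * x) (hτ : ∀ y, τ y = (m : ZMod n) * y)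
    {a a' : ZMod m} {b b' : ZMod n} (h : b'.val + n * a'.val = a.val + m * b.val) :
    shiftFst σ (a', b') = shiftSnd τ (a, b) := by
  have hm := congrArg (Nat.cast : ℕ → ZMod m) h
  have hn := congrArg (Nat.cast : ℕ → ZMod n) h
  simp only [Nat.cast_add, Nat.cast_mul, ZMod.natCast_self, ZMod.natCast_zmod_val, zero_mul,
    add_zero] at hm hn
  simp only [shiftFst, shiftSnd, prodCongrLeft_apply, prodCongrRight_apply, trans_apply,
    coe_addLeft, hσ, hτ]
  exact Prod.ext hm hn

def rowMajorEquiv (m n : ℕ) [NeZero m] [NeZero n] : ZMod m × ZMod n ≃ Fin (m * n) :=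
  ((ZMod.finEquiv m).symm.toEquiv.prodCongr (ZMod.finEquiv n).symm.toEquiv).trans finProdFinEquiv

theorem sign_mul_sign_eq_sign_finTranspose (hm : Odd m) (hn : Odd n)
    {σ : Perm (ZMod m)} {τ : Perm (ZMod n)}
    (hσ : ∀ x, σ x = (n : ZMod m) * x) (hτ : ∀ y, τ y = (m : ZMod n) * y) :
    Perm.sign τ * Perm.sign σ = Perm.sign (finTranspose m n) := by
  have hconj : ∀ x, rowMajorEquiv m n ((shiftSnd τ).trans (shiftFst σ).symm x) =
      finTranspose m n (rowMajorEquiv m n x) := by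
    rintro ⟨a, b⟩
    obtain ⟨⟨a', b'⟩, hy⟩ :=
      (rowMajorEquiv m n).surjective (finTranspose m n (rowMajorEquiv m n (a, b)))
    have hval : b'.val + n * a'.val = a.val + m * b.val := by
      simpa [rowMajorEquiv, finTranspose_finProdFinEquiv_val, ZMod.finEquiv_symm_apply_val]
        using congrArg Fin.val hy
    rw [trans_apply, ← shiftFst_eq_shiftSnd hσ hτ hval, symm_apply_apply, hy]
  have hsign := Perm.sign_eq_sign_of_equiv _ _ _ hconj
  rw [Perm.sign_trans, Perm.sign_symm, sign_shiftSnd hm hn, sign_shiftFst hm hn] at hsign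
  rw [← hsign, mul_comm]

end Zolotarev

theorem stmt_6_general (m n : ℕ) (hm : Odd m) (hn : Odd n) (hm0 : 0 < m) (hn0 : 0 < n) :
    haveI : NeZero m := ⟨hm0.ne'⟩
    haveI : NeZero n := ⟨hn0.ne'⟩
    ∀ (σ : Equiv.Perm (ZMod m)) (τ : Equiv.Perm (ZMod n)),
      (∀ x, σ x = (n : ZMod m) * x) → (∀ y, τ y = (m : ZMod n) * y) →
      Equiv.Perm.sign τ * Equiv.Perm.sign σ = (-1 : ℤˣ) ^ ((m - 1) * (n - 1) / 4) := by
  have : NeZero m := ⟨hm0.ne'⟩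
  have : NeZero n := ⟨hn0.ne'⟩
  intro σ τ hσ hτ
  rw [Zolotarev.sign_mul_sign_eq_sign_finTranspose hm hn hσ hτ, sign_finTranspose hm hn]

/-- Zolotarev reciprocity: for coprime odd positive m, n,
[m/n]·[n/m] = (-1)^((m-1)(n-1)/4), where [a/b] is the sign of multiplication by a on ℤ/bℤ. -/
theorem stmt_6 (m n : ℕ) (hm : Odd m) (hn : Odd n) (hm0 : 0 < m) (hn0 : 0 < n)
    (h : Nat.Coprime m n) :
    haveI : NeZero m := ⟨hm0.ne'⟩
    haveI : NeZero n := ⟨hn0.ne'⟩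
    ∀ (σ : Equiv.Perm (ZMod m)) (τ : Equiv.Perm (ZMod n)),
      (∀ x, σ x = (n : ZMod m) * x) → (∀ y, τ y = (m : ZMod n) * y) →
      Equiv.Perm.sign τ * Equiv.Perm.sign σ = (-1 : ℤˣ) ^ ((m - 1) * (n - 1) / 4) :=
  stmt_6_general m n hm hn hm0 hn0
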